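/- With the generalized eigenbasis setup, π the s-orthogonal projection onto span{φ_1, …, φ_l}, and b(u, v) := a(u, v) + s(πu, πv): for j = 1, …, l let ψ̄_j ∈ V satisfy b(ψ̄_j, v) = s(φ_j, πv) for all v ∈ V. Then for any complex coefficients c_1, …, c_l, setting w_Φ := Σ_{j=1}^{l} c_j φ_j and u := Σ_{j=1}^{l} c_j ψ̄_j, one has s(w_Φ, w_Φ) ≤ (1 + Λ^{-1}) · b(u, u). -/

import Mathlib

open scoped ComplexConjugate

def IsHermitianPD {V : Type*} [AddCommGroup V] [Module ℂ V] (a : V → V → ℂ) : Prop :=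
  (∀ u v w : V, a (u + v) w = a u w + a v w) ∧
  (∀ (c : ℂ) (u v : V), a (c • u) v = c * a u v) ∧
  (∀ u v : V, a u v = conj (a v u)) ∧
  (∀ v : V, v ≠ 0 → 0 < (a v v).re)

/-!
Write `w = Σ cⱼ φⱼ` and `u = Σ cⱼ ψ̄ⱼ`. The form `b` is Hermitian positive definite, and
summing the defining equations of the `ψ̄ⱼ` gives `b(u, v) = s(w, πv)`; since `πw = w`,
`b(u, w) = s(w, w)`.
On `span{φⱼ : j ≤ l}` the eigenvalues are at least `Λ`, so `a(w, w) ≤ Λ⁻¹ s(w, w)` and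
`b(w, w) ≤ (1 + Λ⁻¹) s(w, w)`. Cauchy–Schwarz for `b` then yields
`s(w, w)² ≤ b(u, u) b(w, w) ≤ (1 + Λ⁻¹) b(u, u) s(w, w)`.
-/

namespace IsHermitianPD

variable {V ι : Type*} [AddCommGroup V] [Module ℂ V] {a s : V → V → ℂ}

theorem add_left (h : IsHermitianPD a) (u v w : V) : a (u + v) w = a u w + a v w := h.1 u v w

theorem smul_left (h : IsHermitianPD a) (c : ℂ) (u v : V) : a (c • u) v = c * a u v :=
  h.2.1 c u v

theorem conj_symm (h : IsHermitianPD a) (u v : V) : a u v = conj (a v u) := h.2.2.1 u v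

theorem re_pos (h : IsHermitianPD a) {v : V} (hv : v ≠ 0) : 0 < (a v v).re := h.2.2.2 v hv

def linearLeft (h : IsHermitianPD a) (w : V) : V →ₗ[ℂ] ℂ where
  toFun u := a u w
  map_add' u v := h.add_left u v w
  map_smul' c u := h.smul_left c u w

theorem zero_left (h : IsHermitianPD a) (w : V) : a 0 w = 0 := map_zero (h.linearLeft w)

theorem sub_left (h : IsHermitianPD a) (u v w : V) : a (u - v) w = a u w - a v w :=
  map_sub (h.linearLeft w) u v

theorem sum_smul_left (h : IsHermitianPD a) (t : Finset ι) (c : ι → ℂ) (x : ι → V)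
    (w : V) : a (∑ i ∈ t, c i • x i) w = ∑ i ∈ t, c i * a (x i) w := by
  change h.linearLeft w _ = _
  simp only [map_sum, map_smul, smul_eq_mul]
  rfl

theorem zero_right (h : IsHermitianPD a) (u : V) : a u 0 = 0 := by
  rw [h.conj_symm, h.zero_left, map_zero]

theorem add_right (h : IsHermitianPD a) (u v w : V) : a u (v + w) = a u v + a u w := by
  rw [h.conj_symm, h.add_left, map_add, ← h.conj_symm, ← h.conj_symm]

theorem smul_right (h : IsHermitianPD a) (c : ℂ) (u v : V) : a u (c • v) = conj c * a u v := by
  rw [h.conj_symm, h.smul_left, map_mul, ← h.conj_symm]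

theorem sum_smul_right (h : IsHermitianPD a) (t : Finset ι) (c : ι → ℂ) (x : ι → V)
    (u : V) : a u (∑ i ∈ t, c i • x i) = ∑ i ∈ t, conj (c i) * a u (x i) := by
  rw [h.conj_symm, h.sum_smul_left, map_sum]
  simp only [map_mul, ← h.conj_symm]

theorem re_nonneg (h : IsHermitianPD a) (v : V) : 0 ≤ (a v v).re := by
  rcases eq_or_ne v 0 with rfl | hv
  · simp [h.zero_left]
  · exact (h.re_pos hv).le

/-- Mathlib's inner products are conjugate-linear in the first argument, hence the swap. -/
@[reducible]
def toPreInnerProductSpaceCore (h : IsHermitianPD a) : PreInnerProductSpace.Core ℂ V where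
  inner x y := a y x
  conj_inner_symm x y := (h.conj_symm y x).symm
  re_inner_nonneg := h.re_nonneg
  add_left x y z := h.add_right z x y
  smul_left x y r := h.smul_right r y x

theorem norm_sq_le_re_mul_re (h : IsHermitianPD a) (u w : V) :
    ‖a u w‖ ^ 2 ≤ (a u u).re * (a w w).re := by
  let _ := h.toPreInnerProductSpaceCore
  have hcs : ‖a u w‖ * ‖a w u‖ ≤ (a w w).re * (a u u).re :=
    InnerProductSpace.Core.inner_mul_inner_self_le (𝕜 := ℂ) w u
  rwa [h.conj_symm w u, Complex.norm_conj, ← sq, mul_comm] at hcs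

theorem le_mul_re_of_le_norm (h : IsHermitianPD a) {u w : V} {S k : ℝ} (hS : 0 ≤ S)
    (hk : 0 ≤ k) (huw : S ≤ ‖a u w‖) (hw : (a w w).re ≤ k * S) : S ≤ k * (a u u).re := by
  rcases hS.eq_or_lt with rfl | hSpos
  · exact mul_nonneg hk (h.re_nonneg u)
  · refine le_of_mul_le_mul_right ?_ hSpos
    nlinarith [h.norm_sq_le_re_mul_re u w, mul_le_mul_of_nonneg_left hw (h.re_nonneg u),
      pow_le_pow_left₀ hS huw 2]

theorem eq_zero_of_mem_span_of_forall_eq_zero (h : IsHermitianPD a) {S : Set V} {x : V}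
    (hx : x ∈ Submodule.span ℂ S) (horth : ∀ y ∈ S, a x y = 0) : x = 0 := by
  have hspan : ∀ y ∈ Submodule.span ℂ S, a x y = 0 := fun y hy => by
    induction hy using Submodule.span_induction with
    | mem y hy => exact horth y hy
    | zero => exact h.zero_right x
    | add y z _ _ hy hz => rw [h.add_right, hy, hz, add_zero]
    | smul c y _ hy => rw [h.smul_right, hy, mul_zero]
  by_contra hx0
  simpa [hspan x hx] using h.re_pos hx0

theorem apply_sum_smul_sum_smul [Fintype ι] (h : IsHermitianPD a) (e : ι → V)
    (horth : Pairwise fun i j => a (e i) (e j) = 0) (c : ι → ℂ) :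
    a (∑ i, c i • e i) (∑ i, c i • e i) =
      ∑ i, (Complex.normSq (c i) : ℂ) * a (e i) (e i) := by
  classical
  rw [h.sum_smul_left]
  refine Finset.sum_congr rfl fun i _ => ?_
  rw [h.sum_smul_right, Finset.sum_eq_single i (fun j _ hji => by rw [horth hji.symm, mul_zero])
    (by simp), ← mul_assoc, Complex.mul_conj]

theorem add_comp (ha : IsHermitianPD a) (hs : IsHermitianPD s) (f : V →ₗ[ℂ] V) :
    IsHermitianPD fun x y => a x y + s (f x) (f y) := by
  refine ⟨fun u v w => ?_, fun c u v => ?_, fun u v => ?_, fun v hv => ?_⟩ <;> dsimp only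
  · rw [ha.add_left, map_add, hs.add_left]; ring
  · rw [ha.smul_left, map_smul, hs.smul_left]; ring
  · rw [ha.conj_symm u v, hs.conj_symm (f u) (f v), map_add]
  · simpa using add_pos_of_pos_of_nonneg (ha.re_pos hv) (hs.re_nonneg (f v))

theorem re_apply_sum_smul_le [Fintype ι] (ha : IsHermitianPD a) (hs : IsHermitianPD s)
    (e : ι → V) (haorth : Pairwise fun i j => a (e i) (e j) = 0)
    (hsorth : Pairwise fun i j => s (e i) (e j) = 0) (μ : ι → ℝ)
    (heig : ∀ i, s (e i) (e i) = μ i * a (e i) (e i)) {Λ : ℝ} (hΛ : 0 < Λ) (hμ : ∀ i, Λ ≤ μ i)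
    (c : ι → ℂ) :
    (a (∑ i, c i • e i) (∑ i, c i • e i)).re ≤
      Λ⁻¹ * (s (∑ i, c i • e i) (∑ i, c i • e i)).re := by
  rw [ha.apply_sum_smul_sum_smul e haorth, hs.apply_sum_smul_sum_smul e hsorth, Complex.re_sum,
    Complex.re_sum, Finset.mul_sum]
  refine Finset.sum_le_sum fun i _ => ?_
  have hai : (a (e i) (e i)).re ≤ Λ⁻¹ * (μ i * (a (e i) (e i)).re) := by
    rw [← mul_assoc, ← div_eq_inv_mul]
    exact le_mul_of_one_le_left (ha.re_nonneg _) ((one_le_div hΛ).2 (hμ i))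
  simp only [heig, Complex.re_ofReal_mul]
  rw [mul_left_comm]
  exact mul_le_mul_of_nonneg_left hai (Complex.normSq_nonneg _)

end IsHermitianPD

section OrthogonalProjection

variable {V : Type*} [AddCommGroup V] [Module ℂ V]

def IsOrthProj (s : V → V → ℂ) (S : Set V) (π : V → V) : Prop :=
  (∀ v, π v ∈ Submodule.span ℂ S) ∧ ∀ v, ∀ x ∈ S, s (v - π v) x = 0

variable {s : V → V → ℂ} {S : Set V} {π : V → V}

namespace IsOrthProj

theorem eq_of_mem_span (hπ : IsOrthProj s S π) (hs : IsHermitianPD s) {v y : V}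
    (hy : y ∈ Submodule.span ℂ S) (horth : ∀ x ∈ S, s (v - y) x = 0) : π v = y := by
  refine sub_eq_zero.1 (hs.eq_zero_of_mem_span_of_forall_eq_zero
    (Submodule.sub_mem _ (hπ.1 v) hy) fun x hx => ?_)
  rw [show π v - y = (v - y) - (v - π v) by abel, hs.sub_left, horth x hx, hπ.2 v x hx, sub_zero]

theorem apply_of_mem_span (hπ : IsOrthProj s S π) (hs : IsHermitianPD s) {y : V}
    (hy : y ∈ Submodule.span ℂ S) : π y = y :=
  hπ.eq_of_mem_span hs hy fun _ _ => by rw [sub_self, hs.zero_left]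

theorem isLinearMap (hπ : IsOrthProj s S π) (hs : IsHermitianPD s) : IsLinearMap ℂ π where
  map_add x y := hπ.eq_of_mem_span hs (Submodule.add_mem _ (hπ.1 x) (hπ.1 y)) fun z hz => by
    rw [show x + y - (π x + π y) = (x - π x) + (y - π y) by abel, hs.add_left, hπ.2 x z hz,
      hπ.2 y z hz, add_zero]
  map_smul c x := hπ.eq_of_mem_span hs (Submodule.smul_mem _ c (hπ.1 x)) fun z hz => by
    rw [← smul_sub, hs.smul_left, hπ.2 x z hz, mul_zero]

end IsOrthProj

end OrthogonalProjection

theorem s_norm_wPhi_le_b_norm_u_general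
    {V : Type*} [AddCommGroup V] [Module ℂ V]
    (n : ℕ) (a s : V → V → ℂ) (ha : IsHermitianPD a) (hs : IsHermitianPD s)
    (φ : Fin n → V) (lam : Fin n → ℝ)
    (heig : ∀ (j : Fin n) (w : V), s (φ j) w = (lam j : ℂ) * a (φ j) w)
    (horth : ∀ j k : Fin n, j ≠ k → s (φ j) (φ k) = 0 ∧ a (φ j) (φ k) = 0)
    (Lam : ℝ) (hLam : 1 < Lam)
    (l : ℕ) (hln : l ≤ n)
    (hge : ∀ j : Fin n, (j : ℕ) < l → Lam ≤ lam j)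
    (π : V → V)
    (hπmem : ∀ v : V, π v ∈ Submodule.span ℂ (φ '' {j : Fin n | (j : ℕ) < l}))
    (hπorth : ∀ (v : V) (j : Fin n), (j : ℕ) < l → s (v - π v) (φ j) = 0)
    (ψbar : Fin l → V)
    (hψbar : ∀ (j : Fin l) (v : V),
      a (ψbar j) v + s (π (ψbar j)) (π v) = s (φ (Fin.castLE hln j)) (π v)) :
    ∀ c : Fin l → ℂ,
      (s (∑ j, c j • φ (Fin.castLE hln j)) (∑ j, c j • φ (Fin.castLE hln j))).re ≤
        (1 + Lam⁻¹) *
          ((a (∑ j, c j • ψbar j) (∑ j, c j • ψbar j)).re +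
            (s (π (∑ j, c j • ψbar j)) (π (∑ j, c j • ψbar j))).re) := by
  intro c
  set e : Fin l → V := fun j => φ (Fin.castLE hln j)
  set w := ∑ j, c j • e j
  set u := ∑ j, c j • ψbar j
  have hπ : IsOrthProj s (φ '' {j : Fin n | (j : ℕ) < l}) π :=
    ⟨hπmem, by rintro v _ ⟨j, hj, rfl⟩; exact hπorth v j hj⟩
  let P : V →ₗ[ℂ] V := (hπ.isLinearMap hs).mk' π
  set b : V → V → ℂ := fun x y => a x y + s (P x) (P y)
  have hb : IsHermitianPD b := ha.add_comp hs P
  have hπw : π w = w := hπ.apply_of_mem_span hs <| Submodule.sum_mem _ fun j _ =>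
    Submodule.smul_mem _ _ <| Submodule.subset_span ⟨Fin.castLE hln j, j.isLt, rfl⟩
  have hbuw : b u w = s w w := by
    rw [hb.sum_smul_left, hs.sum_smul_left]
    exact Finset.sum_congr rfl fun j _ => congrArg (c j * ·) ((hψbar j w).trans (by rw [hπw]))
  have hinj : Function.Injective (Fin.castLE hln) := Fin.castLE_injective hln
  have haw : (a w w).re ≤ Lam⁻¹ * (s w w).re :=
    ha.re_apply_sum_smul_le hs e (fun i j hij => (horth _ _ (hinj.ne hij)).2)
      (fun i j hij => (horth _ _ (hinj.ne hij)).1) (fun j => lam (Fin.castLE hln j))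
      (fun j => heig _ _) (by linarith) (fun j => hge _ j.isLt) c
  have hbw : (b w w).re ≤ (1 + Lam⁻¹) * (s w w).re := by
    change (a w w + s (π w) (π w)).re ≤ _
    rw [hπw, Complex.add_re]; linarith
  change (s w w).re ≤ (1 + Lam⁻¹) * (b u u).re
  exact hb.le_mul_re_of_le_norm (hs.re_nonneg w) (by positivity) (hbuw ▸ Complex.re_le_norm _) hbw

/-- Inequality (2.61) in the proof of Lemma 2.12 of the paper (single-subdomain
version): for `w_Φ = Σ_j c_j φ_j` and `u = Σ_j c_j ψ̄_j`, one has
`s(w_Φ, w_Φ) ≤ (1 + Λ⁻¹) b(u, u)` where `b(u, v) = a(u, v) + s(πu, πv)`. -/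
theorem s_norm_wPhi_le_b_norm_u
    {V : Type*} [AddCommGroup V] [Module ℂ V] [FiniteDimensional ℂ V]
    (n : ℕ) (hn : 1 ≤ n) (hdim : Module.finrank ℂ V = n)
    (a s : V → V → ℂ) (ha : IsHermitianPD a) (hs : IsHermitianPD s)
    (φ : Fin n → V) (lam : Fin n → ℝ)
    (hindep : LinearIndependent ℂ φ)
    (hspan : Submodule.span ℂ (Set.range φ) = ⊤)
    (hmono : ∀ j k : Fin n, j ≤ k → lam k ≤ lam j)
    (hpos : ∀ j : Fin n, 0 < lam j)
    (heig : ∀ (j : Fin n) (w : V), s (φ j) w = (lam j : ℂ) * a (φ j) w)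
    (horth : ∀ j k : Fin n, j ≠ k → s (φ j) (φ k) = 0 ∧ a (φ j) (φ k) = 0)
    (hnorm : ∀ j : Fin n, s (φ j) (φ j) = 1)
    (Lam : ℝ) (hLam : 1 < Lam)
    (l : ℕ) (hln : l ≤ n)
    (hge : ∀ j : Fin n, (j : ℕ) < l → Lam ≤ lam j)
    (hlt : ∀ j : Fin n, l ≤ (j : ℕ) → lam j < Lam)
    (π : V → V)
    (hπmem : ∀ v : V, π v ∈ Submodule.span ℂ (φ '' {j : Fin n | (j : ℕ) < l}))
    (hπorth : ∀ (v : V) (j : Fin n), (j : ℕ) < l → s (v - π v) (φ j) = 0)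
    (ψbar : Fin l → V)
    (hψbar : ∀ (j : Fin l) (v : V),
      a (ψbar j) v + s (π (ψbar j)) (π v) = s (φ (Fin.castLE hln j)) (π v)) :
    ∀ c : Fin l → ℂ,
      (s (∑ j, c j • φ (Fin.castLE hln j)) (∑ j, c j • φ (Fin.castLE hln j))).re ≤
        (1 + Lam⁻¹) *
          ((a (∑ j, c j • ψbar j) (∑ j, c j • ψbar j)).re +
            (s (π (∑ j, c j • ψbar j)) (π (∑ j, c j • ψbar j))).re) :=
  s_norm_wPhi_le_b_norm_u_general n a s ha hs φ lam heig horth Lam hLam l hln hge π hπmem hπorth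
    ψbar hψbar
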